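/- arXiv:2410.02243 — 5 statements merged into one kernel-verified Lean document; each statement's English description precedes it below -/
import Mathlib

section
/- For natural numbers F, G, M with 2F + G ≤ M, the ratio C(M-2F, G)/C(M-F, G) is strictly less than exp(-FG/M). -/
/-! Cancelling `G!`, the ratio is `∏_{j<G} (1 - F/(M-F-j))`, and each factor is below
`exp (-F/(M-F-j)) ≤ exp (-F/M)`. -/

open Finset Real

lemma Nat.cast_choose_div_cast_choose_eq_prod (n m k : ℕ) :
    (n.choose k : ℝ) / m.choose k = ∏ j ∈ range k, ((n : ℝ) - j) / ((m : ℝ) - j) := by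
  simp only [Nat.cast_choose_eq_descPochhammer_div, descPochhammer_eval_eq_prod_range]
  rw [div_div_div_cancel_right₀ (by positivity), prod_div_distrib]

lemma Real.sub_div_lt_exp_neg_div {f d M : ℝ} (hf : 0 < f) (hd : 0 < d) (hdM : d ≤ M) :
    (d - f) / d < exp (-f / M) :=
  calc (d - f) / d = 1 - f / d := by field_simp
    _ < exp (-(f / d)) := one_sub_lt_exp_neg (by positivity)
    _ ≤ exp (-f / M) := by rw [neg_div]; gcongr

theorem stmt1 (F G M : ℕ) (hF : 0 < F) (hG : 0 < G) (h : 2 * F + G ≤ M) :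
    ((M - 2 * F).choose G : ℝ) / ((M - F).choose G : ℝ) < Real.exp (-(F * G : ℝ) / M) := by
  have hG_le : (G : ℝ) + 2 * F ≤ M := by exact_mod_cast (by omega : G + 2 * F ≤ M)
  have hF_pos : (0 : ℝ) < F := by exact_mod_cast hF
  have factor_lt : ∀ j ∈ range G,
      ((M : ℝ) - 2 * F - j) / ((M : ℝ) - F - j) < exp (-F / M) := by
    intro j hj
    have hjG : (j : ℝ) < G := by exact_mod_cast mem_range.1 hj
    rw [show (M : ℝ) - 2 * F - j = (M - F - j) - F by ring]
    exact sub_div_lt_exp_neg_div hF_pos (by linarith) (by linarith [j.cast_nonneg (α := ℝ)])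
  have factor_pos : ∀ j ∈ range G, 0 < ((M : ℝ) - 2 * F - j) / ((M : ℝ) - F - j) := by
    intro j hj
    have hjG : (j : ℝ) < G := by exact_mod_cast mem_range.1 hj
    exact div_pos (by linarith) (by linarith)
  rw [Nat.cast_choose_div_cast_choose_eq_prod, Nat.cast_sub (by omega), Nat.cast_sub (by omega)]
  push_cast
  calc _ < ∏ _j ∈ range G, exp (-F / M) :=
        prod_lt_prod_of_nonempty factor_pos factor_lt (nonempty_range_iff.2 hG.ne')
    _ = exp (-(F * G) / M) := by rw [prod_const, card_range, ← exp_nat_mul]; ring_nf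
end

section
/- Let h : [M] → [M] be a two-to-one function with M = FG and G ≥ F ≥ 400. Choose uniformly at random a pair of disjoint subsets S, T ⊆ [M] with |S| = F and |T| = G. Then the probability that there exist s ∈ S and t ∈ T with h(s) = h(t) is greater than 0.2. -/
/-!
Let `X(S, T)` count the claws, i.e. the pairs `(s, t) ∈ S × T` with `h s = h t`. There are
exactly `M` ordered pairs `(s, t)` with `s ≠ t` and `h s = h t`, and each lies in `S × T` for a
fraction `F G / (M (M - 1)) = 1 / (M - 1)` of the pairs `(S, T)`, so `E X = M / (M - 1)`.
Two distinct such pairs involve four distinct points because `h` is two-to-one, so both lie in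
`S × T` for a fraction `F (F - 1) G (G - 1) / (M (M - 1) (M - 2) (M - 3))`, which is at most
`1 / ((M - 1) (M - 2))`; hence `E [X (X - 1)] ≤ M² / ((M - 1) (M - 2))`. The second Bonferroni
inequality `1[X ≥ 1] ≥ X - X (X - 1) / 2` then bounds the probability of a claw from below by
roughly `1/2`.
-/

open Finset

def numDisjointPairs (n f g : ℕ) : ℕ := n.choose f * (n - f).choose g

theorem add_two_mul_add_one_mul_numDisjointPairs (n f g : ℕ) :
    (n + 2) * (n + 1) * numDisjointPairs n f g =
      (f + 1) * (g + 1) * numDisjointPairs (n + 2) (f + 1) (g + 1) := by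
  rcases le_or_gt f n with hf | hf
  · obtain ⟨k, rfl⟩ := Nat.exists_eq_add_of_le hf
    have h1 := Nat.add_one_mul_choose_eq (f + k + 1) f
    have h2 := Nat.choose_mul_succ_eq (f + k) f
    have h3 := Nat.add_one_mul_choose_eq k g
    simp only [numDisjointPairs, show f + k + 2 - (f + 1) = k + 1 by omega,
      show f + k - f = k by omega, show f + k + 1 - f = k + 1 by omega] at h2 ⊢
    linear_combination ((f + k + 2) * k.choose g) * h2 + ((k + 1) * k.choose g) * h1 +
      ((f + k + 2).choose (f + 1) * (f + 1)) * h3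
  · simp [numDisjointPairs, Nat.choose_eq_zero_of_lt hf, show n + 2 - (f + 1) = 0 by omega]

section DisjointPairs

variable {α : Type*} [DecidableEq α]

def disjointPairs (U : Finset α) (f g : ℕ) : Finset (Finset α × Finset α) :=
  {p ∈ U.powersetCard f ×ˢ U.powersetCard g | Disjoint p.1 p.2}

theorem mem_disjointPairs {U : Finset α} {f g : ℕ} {p : Finset α × Finset α} :
    p ∈ disjointPairs U f g ↔
      (p.1 ⊆ U ∧ #p.1 = f) ∧ (p.2 ⊆ U ∧ #p.2 = g) ∧ Disjoint p.1 p.2 := by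
  simp [disjointPairs, mem_powersetCard, and_assoc]

theorem card_disjointPairs (U : Finset α) (f g : ℕ) :
    #(disjointPairs U f g) = numDisjointPairs #U f g := by
  rw [disjointPairs, card_filter, sum_product, numDisjointPairs, ← card_powersetCard f U,
    ← smul_eq_mul, ← sum_const]
  refine sum_congr rfl fun S hS => ?_
  rw [mem_powersetCard] at hS
  rw [← card_filter, ← hS.2, ← card_sdiff_of_subset hS.1, ← card_powersetCard]
  congr 1
  ext T
  simp only [mem_filter, mem_powersetCard, subset_sdiff]
  tauto

theorem card_filter_subset_disjointPairs {U P Q : Finset α} (hP : P ⊆ U) (hQ : Q ⊆ U)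
    (hPQ : Disjoint P Q) (f g : ℕ) :
    #{p ∈ disjointPairs U (f + #P) (g + #Q) | P ⊆ p.1 ∧ Q ⊆ p.2} =
      numDisjointPairs (#U - #P - #Q) f g := by
  have hcard : #(U \ (P ∪ Q)) = #U - #P - #Q := by
    rw [card_sdiff_of_subset (union_subset hP hQ), card_union_of_disjoint hPQ, Nat.sub_sub]
  rw [← hcard, ← card_disjointPairs]
  symm
  apply card_nbij' (fun p => (p.1 ∪ P, p.2 ∪ Q)) (fun p => (p.1 \ P, p.2 \ Q))
  · rintro ⟨S, T⟩ hST
    simp only [coe_filter, mem_coe, mem_disjointPairs, subset_sdiff,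
      disjoint_union_right] at hST ⊢
    obtain ⟨⟨⟨hSU, hSP, hSQ⟩, rfl⟩, ⟨⟨hTU, hTP, hTQ⟩, rfl⟩, hST⟩ := hST
    refine ⟨⟨⟨union_subset hSU hP, card_union_of_disjoint hSP⟩,
      ⟨union_subset hTU hQ, card_union_of_disjoint hTQ⟩, ?_⟩,
      subset_union_right, subset_union_right⟩
    simp only [disjoint_union_left, disjoint_union_right]
    exact ⟨⟨hST, hTP.symm⟩, hSQ, hPQ⟩
  · rintro ⟨S, T⟩ hST
    simp only [coe_filter, mem_coe, mem_disjointPairs] at hST ⊢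
    obtain ⟨⟨⟨hSU, hS⟩, ⟨hTU, hT⟩, hST⟩, hPS, hQT⟩ := hST
    refine ⟨⟨?_, ?_⟩, ⟨?_, ?_⟩, hST.mono sdiff_subset sdiff_subset⟩
    · exact subset_sdiff.2 ⟨sdiff_subset.trans hSU,
        disjoint_union_right.2 ⟨sdiff_disjoint, hST.mono sdiff_subset hQT⟩⟩
    · rw [card_sdiff_of_subset hPS, hS, Nat.add_sub_cancel]
    · exact subset_sdiff.2 ⟨sdiff_subset.trans hTU,
        disjoint_union_right.2 ⟨hST.symm.mono sdiff_subset hPS, sdiff_disjoint⟩⟩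
    · rw [card_sdiff_of_subset hQT, hT, Nat.add_sub_cancel]
  · rintro ⟨S, T⟩ hST
    simp only [mem_coe, mem_disjointPairs, subset_sdiff, disjoint_union_right] at hST
    simp [union_sdiff_cancel_right hST.1.1.2.1, union_sdiff_cancel_right hST.2.1.1.2.2]
  · rintro ⟨S, T⟩ hST
    simp only [coe_filter] at hST
    simp [sdiff_union_of_subset hST.2.1, sdiff_union_of_subset hST.2.2]

theorem card_filter_subset_disjointPairs_le {U P Q : Finset α} (hP : P ⊆ U) (hQ : Q ⊆ U)
    (f g : ℕ) :
    #{p ∈ disjointPairs U (f + #P) (g + #Q) | P ⊆ p.1 ∧ Q ⊆ p.2} ≤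
      numDisjointPairs (#U - #P - #Q) f g := by
  by_cases hPQ : Disjoint P Q
  · exact (card_filter_subset_disjointPairs hP hQ hPQ f g).le
  · rw [card_eq_zero.2 (filter_eq_empty_iff.2 fun p hp hPQp =>
      hPQ ((mem_disjointPairs.1 hp).2.2.mono hPQp.1 hPQp.2))]
    exact Nat.zero_le _

end DisjointPairs

/-- The second Bonferroni inequality `2 * [k ≠ 0] ≥ 2 k - k (k - 1)`, summed over a family. -/
theorem two_mul_sum_card_le_sum_card_offDiag_add {ι κ : Type*} [DecidableEq κ]
    (s : Finset ι) (X : ι → Finset κ) :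
    2 * ∑ i ∈ s, #(X i) ≤ ∑ i ∈ s, #(X i).offDiag + 2 * #{i ∈ s | (X i).Nonempty} := by
  rw [card_filter, mul_sum, mul_sum, ← sum_add_distrib]
  refine sum_le_sum fun i _ => ?_
  rcases (X i).eq_empty_or_nonempty with hX | hX
  · simp [hX]
  · rw [if_pos hX, offDiag_card]
    obtain ⟨k, hk⟩ := Nat.exists_eq_add_of_le' hX.card_pos
    rw [hk, show (k + 1) * (k + 1) - (k + 1) = k * (k + 1) by rw [Nat.sub_eq_of_eq_add]; ring]
    nlinarith [Nat.le_mul_self k]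

theorem sum_card_eq_sum_card_filter_mem {ι κ : Type*} [DecidableEq κ] {s : Finset ι}
    {E : Finset κ} {X : ι → Finset κ} (hX : ∀ i ∈ s, X i ⊆ E) :
    ∑ i ∈ s, #(X i) = ∑ e ∈ E, #{i ∈ s | e ∈ X i} := by
  refine (sum_congr rfl fun i hi => ?_).trans
    (sum_card_bipartiteAbove_eq_sum_card_bipartiteBelow (r := fun i e => e ∈ X i))
  rw [bipartiteAbove, filter_mem_eq_inter, inter_eq_right.2 (hX i hi)]

section Claws

variable {α β : Type*} [Fintype α] [DecidableEq α] [DecidableEq β] {h : α → β}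

def IsTwoToOne (h : α → β) : Prop := ∀ a, #{a' | h a' = h a} = 2

def claws (h : α → β) (p : Finset α × Finset α) : Finset (α × α) :=
  {c ∈ p.1 ×ˢ p.2 | h c.1 = h c.2}

def collisions (h : α → β) : Finset (α × α) := {c | c.1 ≠ c.2 ∧ h c.1 = h c.2}

theorem IsTwoToOne.eq_of_ne {a b b' : α} (hh : IsTwoToOne h) (hb : b ≠ a) (hb' : b' ≠ a)
    (hab : h b = h a) (hab' : h b' = h a) : b = b' := by
  by_contra hbb'
  have : 2 < #{a' | h a' = h a} :=
    two_lt_card.2 ⟨a, by simp, b, by simp [hab], b', by simp [hab'], hb.symm, hb'.symm, hbb'⟩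
  exact this.ne' (hh a)

theorem IsTwoToOne.card_collisions (hh : IsTwoToOne h) : #(collisions h) = Fintype.card α := by
  rw [collisions, card_filter, ← univ_product_univ, sum_product, ← card_univ, card_eq_sum_ones]
  refine sum_congr rfl fun a _ => ?_
  have : ({a' | h a' = h a} : Finset α).erase a = ({b | a ≠ b ∧ h a = h b} : Finset α) := by
    ext b; simp [eq_comm, and_comm]
  rw [← card_filter]
  dsimp only
  rw [← this, card_erase_of_mem (by simp), hh a]

theorem claws_subset_collisions {p : Finset α × Finset α} (hp : Disjoint p.1 p.2) :
    claws h p ⊆ collisions h := by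
  intro c hc
  simp only [claws, collisions, mem_filter, mem_product, mem_univ, true_and] at hc ⊢
  exact ⟨fun he => disjoint_left.1 hp hc.1.1 (he ▸ hc.1.2), hc.2⟩

theorem card_filter_mem_claws {c : α × α} (hc : c ∈ collisions h) (f g : ℕ) :
    #{p ∈ disjointPairs univ (f + 1) (g + 1) | c ∈ claws h p} =
      numDisjointPairs (Fintype.card α - 2) f g := by
  simp only [collisions, mem_filter, mem_univ, true_and] at hc
  have := card_filter_subset_disjointPairs (subset_univ {c.1}) (subset_univ {c.2})
    (disjoint_singleton.2 hc.1) f g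
  simp only [card_singleton, card_univ, Nat.sub_sub, singleton_subset_iff] at this
  rw [← this]
  congr 1
  refine filter_congr fun p _ => ?_
  simp [claws, hc.2]

theorem IsTwoToOne.sum_card_claws (hh : IsTwoToOne h) (f g : ℕ) :
    ∑ p ∈ disjointPairs univ (f + 1) (g + 1), #(claws h p) =
      Fintype.card α * numDisjointPairs (Fintype.card α - 2) f g := by
  rw [sum_card_eq_sum_card_filter_mem
      fun p hp => claws_subset_collisions (mem_disjointPairs.1 hp).2.2,
    sum_congr rfl fun c hc => card_filter_mem_claws hc f g, sum_const, smul_eq_mul,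
    hh.card_collisions]

theorem IsTwoToOne.injOn_fst_collisions (hh : IsTwoToOne h) :
    Set.InjOn Prod.fst (collisions h : Set (α × α)) := by
  rintro ⟨a, b⟩ hab ⟨a', b'⟩ hab' (rfl : a = a')
  simp only [collisions, coe_filter, mem_univ, true_and, Set.mem_ofPred_eq] at hab hab'
  rw [hh.eq_of_ne hab.1.symm hab'.1.symm hab.2.symm hab'.2.symm]

theorem IsTwoToOne.injOn_snd_collisions (hh : IsTwoToOne h) :
    Set.InjOn Prod.snd (collisions h : Set (α × α)) := by
  rintro ⟨a, b⟩ hab ⟨a', b'⟩ hab' (rfl : b = b')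
  simp only [collisions, coe_filter, mem_univ, true_and, Set.mem_ofPred_eq] at hab hab'
  rw [hh.eq_of_ne hab.1 hab'.1 hab.2 hab'.2]

theorem IsTwoToOne.card_filter_mem_offDiag_claws_le (hh : IsTwoToOne h)
    {e : (α × α) × (α × α)} (he : e ∈ collisions h ×ˢ collisions h) (f g : ℕ) :
    #{p ∈ disjointPairs univ (f + 2) (g + 2) | e ∈ (claws h p).offDiag} ≤
      numDisjointPairs (Fintype.card α - 4) f g := by
  obtain ⟨⟨a, b⟩, ⟨a', b'⟩⟩ := e
  obtain ⟨hc, hc'⟩ := mem_product.1 he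
  by_cases hcc : (a, b) = (a', b')
  · simp [hcc]
  have hP : #({a, a'} : Finset α) = 2 :=
    card_pair fun h' => hcc (hh.injOn_fst_collisions hc hc' h')
  have hQ : #({b, b'} : Finset α) = 2 :=
    card_pair fun h' => hcc (hh.injOn_snd_collisions hc hc' h')
  have := card_filter_subset_disjointPairs_le (subset_univ {a, a'}) (subset_univ {b, b'}) f g
  rw [hP, hQ, card_univ] at this
  refine le_trans (card_le_card fun p => ?_) this
  simp only [mem_filter, mem_offDiag, claws, mem_product, insert_subset_iff,
    singleton_subset_iff]
  tauto

theorem IsTwoToOne.sum_card_offDiag_claws_le (hh : IsTwoToOne h) (f g : ℕ) :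
    ∑ p ∈ disjointPairs univ (f + 2) (g + 2), #(claws h p).offDiag ≤
      Fintype.card α * Fintype.card α * numDisjointPairs (Fintype.card α - 4) f g := by
  have hsub : ∀ p ∈ disjointPairs univ (f + 2) (g + 2),
      (claws h p).offDiag ⊆ collisions h ×ˢ collisions h := fun p hp x hx =>
    have hclaws := claws_subset_collisions (h := h) (mem_disjointPairs.1 hp).2.2
    mem_product.2 ⟨hclaws (mem_offDiag.1 hx).1, hclaws (mem_offDiag.1 hx).2.1⟩
  calc _ = ∑ e ∈ collisions h ×ˢ collisions h,
        #{p ∈ disjointPairs univ (f + 2) (g + 2) | e ∈ (claws h p).offDiag} :=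
      sum_card_eq_sum_card_filter_mem hsub
    _ ≤ #(collisions h ×ˢ collisions h) • numDisjointPairs (Fintype.card α - 4) f g :=
      sum_le_card_nsmul _ _ _ fun e he => hh.card_filter_mem_offDiag_claws_le he f g
    _ = _ := by rw [card_product, hh.card_collisions, smul_eq_mul]

theorem IsTwoToOne.card_disjointPairs_lt_five_mul_card_filter_claws_nonempty
    (hh : IsTwoToOne h) {F G : ℕ} (hcard : Fintype.card α = F * G)
    (hF : 3 ≤ F) (hG : 2 ≤ G) :
    #(disjointPairs (univ : Finset α) F G) <
      5 * #{p ∈ disjointPairs (univ : Finset α) F G | (claws h p).Nonempty} := by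
  obtain ⟨f, rfl⟩ : ∃ f, F = f + 2 := ⟨F - 2, by omega⟩
  obtain ⟨g, rfl⟩ : ∃ g, G = g + 2 := ⟨G - 2, by omega⟩
  obtain ⟨n, hn⟩ :=
    Nat.exists_eq_add_of_le' (show 4 ≤ Fintype.card α by rw [hcard]; nlinarith)
  rw [hn] at hcard
  set pairs := disjointPairs (univ : Finset α) (f + 2) (g + 2)
  set c1 := numDisjointPairs (n + 2) (f + 1) (g + 1)
  set c2 := numDisjointPairs n f g
  set K := #{p ∈ pairs | (claws h p).Nonempty}
  have hfirst_moment : ∑ p ∈ pairs, #(claws h p) = (n + 4) * c1 := by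
    simpa [hn] using hh.sum_card_claws (f + 1) (g + 1)
  have hsecond_moment : ∑ p ∈ pairs, #(claws h p).offDiag ≤ (n + 4) * (n + 4) * c2 := by
    simpa [hn] using hh.sum_card_offDiag_claws_le f g
  have hb : 2 * ((n + 4) * c1) ≤ (n + 4) * (n + 4) * c2 + 2 * K := by
    have := two_mul_sum_card_le_sum_card_offDiag_add pairs (claws h)
    rw [hfirst_moment] at this
    omega
  have hf : 1 ≤ f := by omega
  have hfg : f + g ≤ n := by nlinarith
  have hc1 : 0 < c1 :=
    Nat.mul_pos (Nat.choose_pos (by omega)) (Nat.choose_pos (by omega))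
  have hc2 : (n + 2) * (n + 1) * c2 ≤ n * c1 := by
    rw [add_two_mul_add_one_mul_numDisjointPairs n f g]
    exact Nat.mul_le_mul_right c1 (by nlinarith)
  have hN : (n + 3) * c1 = #pairs := by
    refine Nat.eq_of_mul_eq_mul_left (show 0 < n + 4 by omega) ?_
    calc (n + 4) * ((n + 3) * c1)
        = (f + 2) * (g + 2) * numDisjointPairs (n + 4) (f + 2) (g + 2) := by
          rw [← mul_assoc]
          exact add_two_mul_add_one_mul_numDisjointPairs (n + 2) (f + 1) (g + 1)
      _ = (n + 4) * #pairs := by rw [card_disjointPairs, card_univ, hn, hcard]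
  have hK : (n + 4) * (n ^ 2 + 2 * n + 4) * c1 ≤ 2 * (n + 2) * (n + 1) * K := by
    nlinarith [Nat.mul_le_mul_left ((n + 2) * (n + 1)) hb,
      Nat.mul_le_mul_left ((n + 4) * (n + 4)) hc2]
  refine Nat.lt_of_mul_lt_mul_left (a := 2 * (n + 2) * (n + 1)) ?_
  rw [← hN]
  nlinarith

end Claws

open Classical in
theorem stmt2 (F G M : ℕ) (hF : 400 ≤ F) (hFG : F ≤ G) (hM : M = F * G)
    (h : Fin M → Fin M)
    (htwo : ∀ i : Fin M, (Finset.univ.filter (fun i' => h i' = h i)).card = 2) :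
    let pairs := (Finset.powersetCard F (Finset.univ : Finset (Fin M)) ×ˢ
        Finset.powersetCard G (Finset.univ : Finset (Fin M))).filter
        (fun p => Disjoint p.1 p.2)
    ((pairs.filter (fun p => ∃ s ∈ p.1, ∃ t ∈ p.2, h s = h t)).card : ℝ) /
      (pairs.card : ℝ) > 0.2 := by
  intro pairs
  have hlt : #pairs < 5 * #{p ∈ pairs | (claws h p).Nonempty} :=
    IsTwoToOne.card_disjointPairs_lt_five_mul_card_filter_claws_nonempty htwo
      (by simp [hM]) (by omega) (by omega)
  have hclaw : {p ∈ pairs | ∃ s ∈ p.1, ∃ t ∈ p.2, h s = h t} =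
      {p ∈ pairs | (claws h p).Nonempty} :=
    filter_congr fun p _ => by simp [claws, Finset.Nonempty, and_assoc]
  have hpos : 0 < #pairs := by
    have := card_filter_le pairs fun p => (claws h p).Nonempty
    omega
  rw [hclaw, gt_iff_lt, lt_div_iff₀ (by exact_mod_cast hpos)]
  have : (#pairs : ℝ) < 5 * #{p ∈ pairs | (claws h p).Nonempty} := by exact_mod_cast hlt
  linarith
end

section
/- Let F, G be natural numbers with F ≤ G ≤ F², and for 1 ≤ k ≤ F define F'_k = k·⌊F/k⌋, G'_k = (F'_k/k)·⌊G/(F'_k/k)⌋, and M_k = k + k·G'_k/F'_k. Then M_k ≤ M_{k+1} for all 1 ≤ k ≤ F-1, M_1 = 1 + ⌊G/F⌋, and M_F = F + G. -/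
/-- `F'_k = k ⌊F/k⌋`. -/
def Fk (F k : ℕ) : ℕ := k * (F / k)

/-- `G'_k = (F'_k/k) ⌊G/(F'_k/k)⌋`. -/
def Gk (F G k : ℕ) : ℕ := (Fk F k / k) * (G / (Fk F k / k))

/-- `M_k = k + k G'_k / F'_k`. -/
def Mk (F G k : ℕ) : ℕ := k + k * Gk F G k / Fk F k

lemma Mk_eq (F G k : ℕ) (hk : 1 ≤ k) (hkF : k ≤ F) :
    Mk F G k = k + G / (F / k) := by
  have hkpos : 0 < k := hk
  have hq : 0 < F / k := Nat.div_pos hkF hkpos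
  have h1 : Fk F k / k = F / k := by
    unfold Fk; exact Nat.mul_div_cancel_left _ hkpos
  have hFk : 0 < Fk F k := Nat.mul_pos hkpos hq
  unfold Mk Gk
  rw [h1]
  have : k * ((F / k) * (G / (F / k))) = Fk F k * (G / (F / k)) := by
    unfold Fk; ring
  rw [this, Nat.mul_div_cancel_left _ hFk]

theorem stmt5 (F G : ℕ) (hF : 1 ≤ F) (h1 : F ≤ G) (h2 : G ≤ F ^ 2) :
    (∀ k, 1 ≤ k → k ≤ F - 1 → Mk F G k ≤ Mk F G (k + 1)) ∧
    Mk F G 1 = 1 + G / F ∧ Mk F G F = F + G := by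
  refine ⟨?_, ?_, ?_⟩
  · intro k hk hkF
    have hk1F : k + 1 ≤ F := by omega
    rw [Mk_eq F G k hk (by omega), Mk_eq F G (k + 1) (by omega) hk1F]
    have hq : 0 < F / (k + 1) := Nat.div_pos hk1F (by omega)
    have hle : F / (k + 1) ≤ F / k := Nat.div_le_div_left (by omega) hk
    have : G / (F / k) ≤ G / (F / (k + 1)) := Nat.div_le_div_left hle hq
    omega
  · rw [Mk_eq F G 1 le_rfl hF, Nat.div_one]
  · rw [Mk_eq F G F hF le_rfl, Nat.div_self hF, Nat.div_one]
end

section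
/- Let R be a commutative ring containing ℚ and let X = (x_{ij}) be an n×m matrix of indeterminates. Every polynomial in R[x_{11},…,x_{nm}] that is invariant under all simultaneous row permutations x_{ij} ↦ x_{σ(i)j} (σ ∈ S_n) can be written as a polynomial over R in the power-sums P_λ(X) = Σ_{i=1}^n ∏_{j=1}^m x_{ij}^{λ_j} for λ ∈ ℤ_{≥0}^m. -/
open MvPolynomial Function Finset

namespace Stmt9Aux

variable (R : Type*) [CommRing R] (n m : ℕ)

/-- The power sum `P_lam`. -/
noncomputable def pS (lam : Fin m → ℕ) : MvPolynomial (Fin n × Fin m) R :=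
  ∑ i : Fin n, ∏ j : Fin m, (X (i, j) : MvPolynomial (Fin n × Fin m) R) ^ lam j

/-- Product of row monomials along `f`. -/
noncomputable def pM {k : ℕ} (ν : Fin k → Fin m → ℕ) (f : Fin k → Fin n) :
    MvPolynomial (Fin n × Fin m) R :=
  ∏ i, ∏ j, (X (f i, j) : MvPolynomial (Fin n × Fin m) R) ^ ν i j

noncomputable def A : Subalgebra R (MvPolynomial (Fin n × Fin m) R) :=
  Algebra.adjoin R (Set.range (pS R n m))

lemma pS_mem (lam : Fin m → ℕ) : pS R n m lam ∈ A R n m :=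
  Algebra.subset_adjoin ⟨lam, rfl⟩

lemma pM_cons {k : ℕ} (ν : Fin (k+1) → Fin m → ℕ) (j : Fin n) (g : Fin k → Fin n) :
    pM R n m ν (Fin.cons j g) =
      (∏ jj, (X (j, jj) : MvPolynomial (Fin n × Fin m) R) ^ ν 0 jj) *
        pM R n m (fun i => ν i.succ) g := by
  simp [pM, Fin.prod_univ_succ]

lemma pM_cons_merge {k : ℕ} (ν : Fin (k+1) → Fin m → ℕ) (g : Fin k → Fin n) (i : Fin k) :
    pM R n m ν (Fin.cons (g i) g) =
      pM R n m (Function.update (fun i' => ν i'.succ) i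
        (fun jj => ν 0 jj + ν i.succ jj)) g := by
  rw [pM_cons]
  unfold pM
  rw [← Finset.mul_prod_erase univ _ (mem_univ i), ← Finset.mul_prod_erase univ
      (fun i' => ∏ j, (X (g i', j) : MvPolynomial (Fin n × Fin m) R) ^
        Function.update (fun i'' => ν i''.succ) i (fun jj => ν 0 jj + ν i.succ jj) i' j)
      (mem_univ i), ← mul_assoc, ← Finset.prod_mul_distrib]
  congr 1
  · refine Finset.prod_congr rfl fun jj _ => ?_
    rw [Function.update_self, ← pow_add]
  · refine Finset.prod_congr rfl fun i' hi' => ?_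
    rw [Function.update_of_ne (Finset.ne_of_mem_erase hi')]

/-- The recursion (inclusion–exclusion peeling off index `0`). -/
lemma sum_inj_succ {k : ℕ} (ν : Fin (k+1) → Fin m → ℕ) :
    ∑ f ∈ (univ.filter Function.Injective : Finset (Fin (k+1) → Fin n)), pM R n m ν f
      = pS R n m (ν 0) *
          (∑ g ∈ (univ.filter Function.Injective : Finset (Fin k → Fin n)),
            pM R n m (fun i => ν i.succ) g)
        - ∑ i : Fin k,
            ∑ g ∈ (univ.filter Function.Injective : Finset (Fin k → Fin n)),
              pM R n m (Function.update (fun i' => ν i'.succ) i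
                (fun jj => ν 0 jj + ν i.succ jj)) g := by
  have key : ∀ g : Fin k → Fin n, Function.Injective g →
      (∑ j : Fin n, if Function.Injective (Fin.cons j g : Fin (k+1) → Fin n)
          then pM R n m ν (Fin.cons j g) else 0)
        = pS R n m (ν 0) * pM R n m (fun i => ν i.succ) g
          - ∑ i : Fin k, pM R n m (Function.update (fun i' => ν i'.succ) i
              (fun jj => ν 0 jj + ν i.succ jj)) g := by
    intro g hg
    have h1 : ∀ j : Fin n,
        (if Function.Injective (Fin.cons j g : Fin (k+1) → Fin n)
          then pM R n m ν (Fin.cons j g) else 0)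
        = pM R n m ν (Fin.cons j g)
          - (if j ∈ univ.image g then pM R n m ν (Fin.cons j g) else 0) := by
      intro j
      by_cases hj : j ∈ univ.image g
      · have : ¬ Function.Injective (Fin.cons j g : Fin (k+1) → Fin n) := by
          rw [Fin.cons_injective_iff]
          rintro ⟨hnot, -⟩
          obtain ⟨i, -, hi⟩ := Finset.mem_image.1 hj
          exact hnot ⟨i, hi⟩
        simp [this, hj]
      · have : Function.Injective (Fin.cons j g : Fin (k+1) → Fin n) := by
          rw [Fin.cons_injective_iff]
          refine ⟨?_, hg⟩
          rintro ⟨i, hi⟩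
          exact hj (Finset.mem_image.2 ⟨i, mem_univ _, hi⟩)
        simp [this, hj]
    rw [Finset.sum_congr rfl fun j _ => h1 j, Finset.sum_sub_distrib]
    congr 1
    · rw [pS, Finset.sum_mul]
      exact Finset.sum_congr rfl fun j _ => (pM_cons R n m ν j g).symm ▸ rfl
    · rw [← Finset.sum_filter, Finset.filter_univ_mem,
        Finset.sum_image (fun a _ b _ h => hg h)]
      exact Finset.sum_congr rfl fun i _ => pM_cons_merge R n m ν g i
  have step : ∀ g : Fin k → Fin n,
      (∑ j : Fin n, if Function.Injective (Fin.cons j g : Fin (k+1) → Fin n)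
          then pM R n m ν (Fin.cons j g) else 0)
        = if Function.Injective g then
            (pS R n m (ν 0) * pM R n m (fun i => ν i.succ) g
              - ∑ i : Fin k, pM R n m (Function.update (fun i' => ν i'.succ) i
                  (fun jj => ν 0 jj + ν i.succ jj)) g)
          else 0 := by
    intro g
    by_cases hg : Function.Injective g
    · rw [if_pos hg, ← key g hg]
    · rw [if_neg hg]
      refine Finset.sum_eq_zero fun j _ => ?_
      rw [if_neg]
      rw [Fin.cons_injective_iff]
      exact fun h => hg h.2
  rw [Finset.sum_filter,
    ← Equiv.sum_comp (Fin.consEquiv (fun _ : Fin (k+1) => Fin n))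
      (fun f => if Function.Injective f then pM R n m ν f else 0),
    Fintype.sum_prod_type]
  rw [Finset.sum_comm]
  change (∑ g : Fin k → Fin n, ∑ j : Fin n,
    if Function.Injective (Fin.cons j g : Fin (k+1) → Fin n)
      then pM R n m ν (Fin.cons j g) else 0) = _
  rw [Finset.sum_congr rfl fun g _ => step g, ← Finset.sum_filter,
    Finset.sum_sub_distrib, Finset.mul_sum]
  congr 1
  rw [Finset.sum_comm]

lemma T_mem : ∀ (k : ℕ) (ν : Fin k → Fin m → ℕ),
    (∑ f ∈ (univ.filter Function.Injective : Finset (Fin k → Fin n)), pM R n m ν f)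
      ∈ A R n m
  | 0, ν => by
      have h1 : ∀ f : Fin 0 → Fin n, pM R n m ν f = 1 := fun f => by simp [pM]
      rw [Finset.sum_congr rfl fun f _ => h1 f, Finset.sum_const]
      simp only [nsmul_eq_mul, mul_one]
      exact Subalgebra.natCast_mem _ _
  | (k+1), ν => by
      rw [sum_inj_succ]
      exact sub_mem (mul_mem (pS_mem R n m _) (T_mem k _))
        (sum_mem fun i _ => T_mem k _)

lemma sum_perm_eq (F : (Fin n → Fin n) → MvPolynomial (Fin n × Fin m) R) :
    ∑ σ : Equiv.Perm (Fin n), F ⇑σ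
      = ∑ f ∈ (univ.filter Function.Injective : Finset (Fin n → Fin n)), F f := by
  refine Finset.sum_bij (fun σ _ => ⇑σ) ?_ ?_ ?_ ?_
  · intro σ _; exact mem_filter.2 ⟨mem_univ _, σ.injective⟩
  · intro a _ b _ h; exact Equiv.coe_fn_injective h
  · intro f hf
    have hinj : Function.Injective f := (mem_filter.1 hf).2
    exact ⟨Equiv.ofBijective f (Finite.injective_iff_bijective.1 hinj), mem_univ _, rfl⟩
  · intros; rfl

lemma sum_rename_monomial_mem (μ : (Fin n × Fin m) →₀ ℕ) (c : R) :
    (∑ σ : Equiv.Perm (Fin n),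
      rename (fun q : Fin n × Fin m => (σ q.1, q.2)) (monomial μ c)) ∈ A R n m := by
  have hmono : (monomial μ c : MvPolynomial (Fin n × Fin m) R)
      = C c * ∏ q : Fin n × Fin m, X q ^ μ q := by
    rw [monomial_eq]
    congr 1
    exact Finsupp.prod_fintype _ _ fun q => pow_zero _
  have hren : ∀ σ : Equiv.Perm (Fin n),
      rename (fun q : Fin n × Fin m => (σ q.1, q.2)) (monomial μ c)
        = C c * pM R n m (fun i j => μ (i, j)) ⇑σ := by
    intro σ
    rw [hmono, map_mul, rename_C, map_prod]
    congr 1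
    rw [show (∏ q : Fin n × Fin m,
        rename (fun q : Fin n × Fin m => (σ q.1, q.2)) (X q ^ μ q))
      = ∏ q : Fin n × Fin m,
          (X (σ q.1, q.2) : MvPolynomial (Fin n × Fin m) R) ^ μ q from
      Finset.prod_congr rfl fun q _ => by rw [map_pow, rename_X]]
    rw [Fintype.prod_prod_type]
    rfl
  rw [Finset.sum_congr rfl fun σ _ => hren σ, ← Finset.mul_sum]
  rw [sum_perm_eq R n m (fun f => pM R n m (fun i j => μ (i, j)) f)]
  exact mul_mem (by rw [← MvPolynomial.algebraMap_eq]; exact Subalgebra.algebraMap_mem _ _)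
    (T_mem R n m n _)

end Stmt9Aux

/-- Fundamental theorem of multisymmetric polynomials: every polynomial in the
`n × m` matrix of indeterminates invariant under simultaneous row permutations
lies in the `R`-subalgebra generated by the power-sums `P_λ(X) = ∑ i, ∏ j, X i j ^ λ j`. -/
theorem stmt9 (R : Type*) [CommRing R] [Algebra ℚ R] (n m : ℕ)
    (p : MvPolynomial (Fin n × Fin m) R)
    (hp : ∀ σ : Equiv.Perm (Fin n),
      MvPolynomial.rename (fun q : Fin n × Fin m => (σ q.1, q.2)) p = p) :
    p ∈ Algebra.adjoin R
      (Set.range (fun lam : Fin m → ℕ =>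
        ∑ i : Fin n, ∏ j : Fin m,
          (MvPolynomial.X (i, j) : MvPolynomial (Fin n × Fin m) R) ^ lam j)) := by
  show p ∈ Stmt9Aux.A R n m
  have hsum : (∑ σ : Equiv.Perm (Fin n),
      MvPolynomial.rename (fun q : Fin n × Fin m => (σ q.1, q.2)) p) ∈ Stmt9Aux.A R n m := by
    have expand : (∑ σ : Equiv.Perm (Fin n),
        MvPolynomial.rename (fun q : Fin n × Fin m => (σ q.1, q.2)) p)
        = ∑ μ ∈ p.support, ∑ σ : Equiv.Perm (Fin n),
            MvPolynomial.rename (fun q : Fin n × Fin m => (σ q.1, q.2))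
              (MvPolynomial.monomial μ (MvPolynomial.coeff μ p)) := by
      rw [Finset.sum_comm]
      refine Finset.sum_congr rfl fun σ _ => ?_
      conv_lhs => rw [p.as_sum]
      exact map_sum _ _ _
    rw [expand]
    exact sum_mem fun μ _ => Stmt9Aux.sum_rename_monomial_mem R n m μ _
  have hcard : (∑ σ : Equiv.Perm (Fin n),
      MvPolynomial.rename (fun q : Fin n × Fin m => (σ q.1, q.2)) p)
      = (n.factorial : ℕ) • p := by
    rw [Finset.sum_congr rfl fun σ _ => hp σ, Finset.sum_const, Finset.card_univ,
      Fintype.card_perm, Fintype.card_fin]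
  rw [hcard] at hsum
  have hfac : ((n.factorial : ℚ) : ℚ) ≠ 0 := Nat.cast_ne_zero.2 n.factorial_ne_zero
  have hp' : (algebraMap ℚ R (n.factorial : ℚ)⁻¹) • ((n.factorial : ℕ) • p) = p := by
    rw [← Nat.cast_smul_eq_nsmul R, smul_smul]
    rw [show ((n.factorial : ℕ) : R) = algebraMap ℚ R (n.factorial : ℚ) by
      rw [map_natCast]]
    rw [← map_mul, inv_mul_cancel₀ hfac, map_one, one_smul]
  rw [← hp']
  exact Subalgebra.smul_mem _ hsum _
end

section
/- Let Φ be a bisymmetric Boolean function on pairs (f,g) ∈ [M]^{[F]} × [M]^{[G]}, expressed in Boolean variables x_{ij} (indicator of f(i)=j) and y_{kj} (indicator of g(k)=j). If there exists a polynomial P of degree at most d in the x_{ij} and y_{kj} that ε-approximates Φ, then there exists a polynomial Q of degree at most d in the 2M variables z_1,…,z_M, w_1,…,w_M (where z_j = |f^{-1}(j)| and w_j = |g^{-1}(j)|) that ε-approximates Φ, and conversely. -/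
/-!
The substitution `z_j ↦ ∑ i, x_{ij}`, `w_j ↦ ∑ k, y_{kj}` turns `Q` into `P` without raising the
degree. Conversely, since `Φ` is invariant under permuting the domains of `f` and `g`, the average
of `P` over all such permutations is again an `ε`-approximation. The average of a monomial
`∏_{(i,j) ∈ S} x_{ij}` vanishes unless `S` is the graph of a partial function, and then equals
`(F - |S|)! / F! * ∏_j z_j (z_j - 1) ⋯ (z_j - k_j + 1)` with `k_j = #{(i, j) ∈ S}`, a polynomial of
degree `|S|` in the fibre sizes `z_j`.
-/

open Finset MvPolynomial Equiv
open scoped Nat BigOperators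

section PermCount

variable {α β : Type*} [Fintype α] [DecidableEq α] [DecidableEq β] (f : α → β)

-- `[Fintype β]` makes `∀ p ∈ S, _` decidable through the same instance as in
-- `card_perm_forall_apply_eq`.
lemma card_perm_apply_eq_swap [Fintype β] (S : Finset (α × β)) {a b : α}
    (ha : a ∉ S.image Prod.fst) (hb : b ∉ S.image Prod.fst) (j : β) :
    #{π : Perm α | (∀ p ∈ S, f (π p.1) = p.2) ∧ f (π a) = j} =
      #{π : Perm α | (∀ p ∈ S, f (π p.1) = p.2) ∧ f (π b) = j} := by
  refine card_equiv (Equiv.mulRight (swap a b)) fun π => ?_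
  have hfix : ∀ p ∈ S, swap a b p.1 = p.1 := fun p hp =>
    swap_apply_of_ne_of_ne (fun h => ha (h ▸ mem_image_of_mem _ hp))
      (fun h => hb (h ▸ mem_image_of_mem _ hp))
  have hS : (∀ p ∈ S, f (π (swap a b p.1)) = p.2) ↔ ∀ p ∈ S, f (π p.1) = p.2 :=
    forall₂_congr fun p hp => by rw [hfix p hp]
  simp only [mem_filter, mem_univ, true_and, coe_mulRight, Perm.mul_apply, swap_apply_right, hS]

lemma card_compl_apply_eq (S : Finset (α × β)) (hS : Set.InjOn Prod.fst (S : Set (α × β)))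
    {π : Perm α} (hπ : ∀ p ∈ S, f (π p.1) = p.2) (j : β) :
    #{b ∈ (S.image Prod.fst)ᶜ | f (π b) = j} = #{a | f a = j} - #{p ∈ S | p.2 = j} := by
  have hall : #{b | f (π b) = j} = #{a | f a = j} :=
    card_equiv π fun b => by simp
  have hin : #{b ∈ S.image Prod.fst | f (π b) = j} = #{p ∈ S | p.2 = j} := by
    rw [← card_image_of_injOn (hS.mono fun p hp => (mem_filter.1 hp).1)]
    congr 1
    ext b
    simp only [mem_filter, mem_image]
    constructor
    · rintro ⟨⟨p, hp, rfl⟩, hj⟩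
      exact ⟨p, ⟨hp, hπ p hp ▸ hj⟩, rfl⟩
    · rintro ⟨p, ⟨hp, hj⟩, rfl⟩
      exact ⟨⟨p, hp, rfl⟩, (hπ p hp).trans hj⟩
  have hsplit : (S.image Prod.fst)ᶜ.filter (fun b => f (π b) = j) =
      univ.filter (fun b => f (π b) = j) \ (S.image Prod.fst).filter (fun b => f (π b) = j) := by
    ext b
    simp only [mem_filter, mem_compl, mem_sdiff, mem_univ, true_and]
    tauto
  rw [hsplit, card_sdiff_of_subset (fun b hb => by simp_all), hall, hin]

-- Constraining any one of the `|α| - |S|` free points gives the same count, and summing over them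
-- counts each admissible `π` once for every free point sent into the fibre of `j`.
lemma card_perm_insert_mul [Fintype β] (S : Finset (α × β))
    (hS : Set.InjOn Prod.fst (S : Set (α × β))) {a : α} (ha : a ∉ S.image Prod.fst) (j : β) :
    #{π : Perm α | ∀ p ∈ insert (a, j) S, f (π p.1) = p.2} * (Fintype.card α - #S) =
      #{π : Perm α | ∀ p ∈ S, f (π p.1) = p.2} * (#{a | f a = j} - #{p ∈ S | p.2 = j}) := by
  set T := univ.filter fun π : Perm α => ∀ p ∈ S, f (π p.1) = p.2
  set C := (S.image Prod.fst)ᶜ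
  have hins : ∀ b ∈ C, #{π : Perm α | ∀ p ∈ insert (a, j) S, f (π p.1) = p.2} =
      #(T.filter fun π => f (π b) = j) := by
    intro b hb
    rw [filter_filter, ← card_perm_apply_eq_swap f S ha (mem_compl.1 hb)]
    simp only [forall_mem_insert, and_comm]
  calc _ = ∑ b ∈ C, #(T.filter fun π => f (π b) = j) := by
        rw [sum_congr rfl fun b hb => (hins b hb).symm, sum_const, card_compl,
          card_image_of_injOn hS, smul_eq_mul, mul_comm]
    _ = ∑ π ∈ T, #(C.filter fun b => f (π b) = j) :=
        sum_card_bipartiteAbove_eq_sum_card_bipartiteBelow fun (b : α) (π : Perm α) => f (π b) = j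
    _ = _ := by
        rw [sum_congr rfl fun π hπ => card_compl_apply_eq f S hS (mem_filter.1 hπ).2 j,
          sum_const, smul_eq_mul]

theorem card_perm_forall_apply_eq [Fintype β] (S : Finset (α × β))
    (hS : Set.InjOn Prod.fst (S : Set (α × β))) :
    #{π : Perm α | ∀ p ∈ S, f (π p.1) = p.2} =
      (Fintype.card α - #S)! * ∏ j, (#{a | f a = j}).descFactorial #{p ∈ S | p.2 = j} := by
  induction S using Finset.induction_on with
  | empty => simp [Fintype.card_perm]
  | @insert p S hp ih =>
    obtain ⟨a, j⟩ := p
    have hS' : Set.InjOn Prod.fst (S : Set (α × β)) := hS.mono (by simp)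
    have ha : a ∉ S.image Prod.fst := by
      simp only [mem_image, not_exists, not_and]
      intro q hq hqa
      exact hp (@hS q (by simp [hq]) (a, j) (by simp) hqa ▸ hq)
    have hlt : #S < Fintype.card α := by
      have := card_le_card_of_injOn Prod.fst (fun _ _ => mem_univ _) hS
      rw [card_insert_of_notMem hp] at this
      simpa using this
    have hfiber : ∀ j', (#{a | f a = j'}).descFactorial #{p ∈ insert (a, j) S | p.2 = j'} =
        (if j = j' then #{a | f a = j} - #{p ∈ S | p.2 = j} else 1) *
          (#{a | f a = j'}).descFactorial #{p ∈ S | p.2 = j'} := by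
      intro j'
      rw [filter_insert]
      split_ifs with h
      · subst h
        rw [card_insert_of_notMem (fun h => hp (mem_filter.1 h).1), Nat.descFactorial_succ]
      · rw [one_mul]
    have hfact : (Fintype.card α - #S)! =
        (Fintype.card α - #S) * (Fintype.card α - (#S + 1))! := by
      rw [← Nat.sub_sub, Nat.mul_factorial_pred (by omega)]
    apply Nat.eq_of_mul_eq_mul_right (by omega : 0 < Fintype.card α - #S)
    rw [card_perm_insert_mul f S hS' ha j, ih hS', card_insert_of_notMem hp,
      prod_congr rfl fun j' _ => hfiber j', prod_mul_distrib, prod_ite_eq, if_pos (mem_univ _),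
      hfact]
    ring

end PermCount

section Symmetrization

variable {α β : Type*} [Fintype α] [DecidableEq α] [Fintype β] [DecidableEq β]

-- The variables `x_{ij}` and `z_j` of the paper are `graphIndicator f (i, j)` and `fiberCard f j`.
def graphIndicator (f : α → β) (p : α × β) : ℝ := if f p.1 = p.2 then 1 else 0

def fiberCard (f : α → β) (j : β) : ℝ := #{a | f a = j}

variable (α) in
open Classical in
noncomputable def symmetrizedMonomial (S : Finset (α × β)) : MvPolynomial β ℝ :=
  if Set.InjOn Prod.fst (S : Set (α × β)) then
    C (((Fintype.card α - #S)! : ℝ) / (Fintype.card α)!) *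
      ∏ j, ∏ t ∈ range #{p ∈ S | p.2 = j}, (X j - C (t : ℝ))
  else 0

lemma totalDegree_symmetrizedMonomial_le (S : Finset (α × β)) :
    (symmetrizedMonomial α S).totalDegree ≤ #S := by
  unfold symmetrizedMonomial
  split_ifs
  · refine (totalDegree_mul _ _).trans ?_
    rw [totalDegree_C, zero_add, card_eq_sum_card_fiberwise (fun p _ => mem_univ p.2)]
    refine (totalDegree_finsetProd _ _).trans (sum_le_sum fun j _ => ?_)
    refine (totalDegree_finsetProd _ _).trans ?_
    calc _ ≤ ∑ _t ∈ range #{p ∈ S | p.2 = j}, 1 := sum_le_sum fun t _ =>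
          (totalDegree_sub_C_le _ _).trans (totalDegree_X _).le
      _ = _ := by simp
  · simp

lemma eval_symmetrizedMonomial (f : α → β) (S : Finset (α × β)) :
    eval (fiberCard f) (symmetrizedMonomial α S) =
      𝔼 π : Perm α, ∏ p ∈ S, graphIndicator (f ∘ π) p := by
  have hcount : ∑ π : Perm α, ∏ p ∈ S, graphIndicator (f ∘ π) p =
      #{π : Perm α | ∀ p ∈ S, f (π p.1) = p.2} := by
    simp only [graphIndicator, Function.comp_apply, prod_boole]
    rw [natCast_card_filter]
    congr! 2
  rw [Fintype.expect_eq_sum_div_card, hcount, Fintype.card_perm]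
  unfold symmetrizedMonomial
  split_ifs with hS
  · rw [card_perm_forall_apply_eq f S hS]
    simp only [eval_mul, eval_C, map_prod, map_sub, eval_X, fiberCard,
      ← descPochhammer_eval_eq_prod_range, descPochhammer_eval_eq_descFactorial]
    push_cast
    ring
  · have hempty : ({π : Perm α | ∀ p ∈ S, f (π p.1) = p.2} : Finset (Perm α)) = ∅ := by
      refine filter_eq_empty_iff.2 fun π _ hπ => hS fun p hp q hq hpq => Prod.ext hpq ?_
      rw [← hπ p hp, ← hπ q hq, hpq]
    rw [hempty, map_zero, card_empty, Nat.cast_zero, zero_div]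

omit [Fintype α] [DecidableEq α] [Fintype β] in
lemma graphIndicator_pow (f : α → β) (p : α × β) {n : ℕ} (hn : n ≠ 0) :
    graphIndicator f p ^ n = graphIndicator f p := by
  unfold graphIndicator
  split_ifs <;> simp [hn]

variable {γ : Type*} [Fintype γ] [DecidableEq γ]

noncomputable def symmetrized (P : MvPolynomial ((α × β) ⊕ (γ × β)) ℝ) :
    MvPolynomial (β ⊕ β) ℝ :=
  ∑ m ∈ P.support, C (P.coeff m) *
    (rename Sum.inl (symmetrizedMonomial α m.support.toLeft) *
      rename Sum.inr (symmetrizedMonomial γ m.support.toRight))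

lemma totalDegree_symmetrized_le (P : MvPolynomial ((α × β) ⊕ (γ × β)) ℝ) :
    (symmetrized P).totalDegree ≤ P.totalDegree := by
  refine (totalDegree_finsetSum _ _).trans (Finset.sup_le fun m hm => ?_)
  refine (totalDegree_mul _ _).trans ?_
  rw [totalDegree_C, zero_add]
  calc _ ≤ #m.support.toLeft + #m.support.toRight :=
        (totalDegree_mul _ _).trans (add_le_add
          ((totalDegree_rename_le _ _).trans (totalDegree_symmetrizedMonomial_le _))
          ((totalDegree_rename_le _ _).trans (totalDegree_symmetrizedMonomial_le _)))
    _ = #m.support := card_toLeft_add_card_toRight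
    _ ≤ m.sum fun _ e => e := by
        rw [card_eq_sum_ones, Finsupp.sum]
        exact sum_le_sum fun q hq => Nat.one_le_iff_ne_zero.2 (Finsupp.mem_support_iff.1 hq)
    _ ≤ P.totalDegree := le_totalDegree hm

lemma eval_symmetrized (f : α → β) (g : γ → β) (P : MvPolynomial ((α × β) ⊕ (γ × β)) ℝ) :
    eval (Sum.elim (fiberCard f) (fiberCard g)) (symmetrized P) =
      𝔼 π : Perm α, 𝔼 ρ : Perm γ,
        eval (Sum.elim (graphIndicator (f ∘ π)) (graphIndicator (g ∘ ρ))) P := by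
  have hmonomial : ∀ (u : α → β) (v : γ → β) (m : (α × β) ⊕ (γ × β) →₀ ℕ),
      ∏ q ∈ m.support, Sum.elim (graphIndicator u) (graphIndicator v) q ^ m q =
        (∏ p ∈ m.support.toLeft, graphIndicator u p) *
          ∏ p ∈ m.support.toRight, graphIndicator v p := by
    intro u v m
    rw [prod_sum_eq_prod_toLeft_mul_prod_toRight]
    congr 1 <;> refine prod_congr rfl fun p hp => graphIndicator_pow _ _ ?_ <;> simpa using hp
  simp only [symmetrized, map_sum, eval_mul, eval_C, eval_rename, Sum.elim_comp_inl,
    Sum.elim_comp_inr, eval_symmetrizedMonomial, expect_mul_expect]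
  simp only [mul_expect, eval_eq _ P, hmonomial, expect_sum_comm]

end Symmetrization

lemma expect_mem_Icc_and_abs_sub_le {ι : Type*} {s : Finset ι} (hs : s.Nonempty) {v : ι → ℝ}
    {c ε : ℝ} (h : ∀ i ∈ s, v i ∈ Set.Icc 0 1 ∧ |v i - c| ≤ ε) :
    𝔼 i ∈ s, v i ∈ Set.Icc 0 1 ∧ |𝔼 i ∈ s, v i - c| ≤ ε := by
  refine ⟨⟨le_expect hs fun i hi => (h i hi).1.1, expect_le hs fun i hi => (h i hi).1.2⟩, ?_⟩
  rw [← expect_const hs c, ← expect_sub_distrib]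
  exact (abs_expect_le _ _).trans (expect_le hs fun i hi => (h i hi).2)

lemma totalDegree_bind₁_le {σ τ R : Type*} [CommSemiring R] {s : σ → MvPolynomial τ R}
    (hs : ∀ i, (s i).IsHomogeneous 1) (q : MvPolynomial σ R) :
    (bind₁ s q).totalDegree ≤ q.totalDegree := by
  conv_lhs => rw [← sum_homogeneousComponent q]
  rw [map_sum]
  refine (totalDegree_finsetSum _ _).trans (Finset.sup_le fun i hi => ?_)
  rw [← aeval_eq_bind₁]
  refine ((homogeneousComponent_isHomogeneous i q).aeval s hs).totalDegree_le.trans ?_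
  simpa [Nat.lt_succ_iff] using hi

section ColumnSums

variable {α β γ : Type*} [Fintype α] [Fintype γ] [DecidableEq β]

noncomputable def columnSums (α γ : Type*) [Fintype α] [Fintype γ] :
    β ⊕ β → MvPolynomial ((α × β) ⊕ (γ × β)) ℝ :=
  Sum.elim (fun j => ∑ a, X (Sum.inl (a, j))) (fun j => ∑ c, X (Sum.inr (c, j)))

omit [DecidableEq β] in
lemma isHomogeneous_columnSums (i : β ⊕ β) : (columnSums α γ i).IsHomogeneous 1 := by
  cases i <;> exact IsHomogeneous.sum _ _ _ fun _ _ => isHomogeneous_X _ _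

lemma eval_columnSums (f : α → β) (g : γ → β) (i : β ⊕ β) :
    eval (Sum.elim (graphIndicator f) (graphIndicator g)) (columnSums α γ i) =
      Sum.elim (fiberCard f) (fiberCard g) i := by
  cases i <;> simp [columnSums, graphIndicator, fiberCard]

lemma eval_bind₁_columnSums (f : α → β) (g : γ → β) (Q : MvPolynomial (β ⊕ β) ℝ) :
    eval (Sum.elim (graphIndicator f) (graphIndicator g)) (bind₁ (columnSums α γ) Q) =
      eval (Sum.elim (fiberCard f) (fiberCard g)) Q := by
  refine (eval₂Hom_bind₁ _ _ _ _).trans ?_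
  exact congrArg (eval · Q) (funext (eval_columnSums f g))

end ColumnSums

open Classical in
/-- For a bisymmetric Boolean function `Φ` on pairs of functions, a degree-`d`
`ε`-approximating polynomial in the indicator variables `x_{ij}, y_{kj}` exists
iff a degree-`d` `ε`-approximating polynomial in the preimage-count variables
`z_1,…,z_M, w_1,…,w_M` exists. -/
theorem stmt13 (F G M : ℕ) (d : ℕ) (ε : ℝ)
    (Φ : (Fin F → Fin M) → (Fin G → Fin M) → Bool)
    (hsym : ∀ (f : Fin F → Fin M) (g : Fin G → Fin M) (πF : Equiv.Perm (Fin F))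
      (πG : Equiv.Perm (Fin G)) (σ : Equiv.Perm (Fin M)),
      Φ (σ ∘ f ∘ πF) (σ ∘ g ∘ πG) = Φ f g) :
    (∃ P : MvPolynomial ((Fin F × Fin M) ⊕ (Fin G × Fin M)) ℝ,
      P.totalDegree ≤ d ∧
      ∀ (f : Fin F → Fin M) (g : Fin G → Fin M),
        MvPolynomial.eval
            (Sum.elim (fun p : Fin F × Fin M => if f p.1 = p.2 then (1 : ℝ) else 0)
              (fun p : Fin G × Fin M => if g p.1 = p.2 then (1 : ℝ) else 0)) P ∈
          Set.Icc (0 : ℝ) 1 ∧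
        |MvPolynomial.eval
            (Sum.elim (fun p : Fin F × Fin M => if f p.1 = p.2 then (1 : ℝ) else 0)
              (fun p : Fin G × Fin M => if g p.1 = p.2 then (1 : ℝ) else 0)) P -
          (if Φ f g then 1 else 0)| ≤ ε) ↔
    (∃ Q : MvPolynomial (Fin M ⊕ Fin M) ℝ,
      Q.totalDegree ≤ d ∧
      ∀ (f : Fin F → Fin M) (g : Fin G → Fin M),
        MvPolynomial.eval
            (Sum.elim
              (fun jj : Fin M => ((Finset.univ.filter (fun i => f i = jj)).card : ℝ))
              (fun jj : Fin M => ((Finset.univ.filter (fun k => g k = jj)).card : ℝ))) Q ∈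
          Set.Icc (0 : ℝ) 1 ∧
        |MvPolynomial.eval
            (Sum.elim
              (fun jj : Fin M => ((Finset.univ.filter (fun i => f i = jj)).card : ℝ))
              (fun jj : Fin M => ((Finset.univ.filter (fun k => g k = jj)).card : ℝ))) Q -
          (if Φ f g then 1 else 0)| ≤ ε) := by
  constructor
  · rintro ⟨P, hPd, hP⟩
    refine ⟨symmetrized P, (totalDegree_symmetrized_le P).trans hPd, fun f g => ?_⟩
    have hinv (π : Perm (Fin F)) (ρ : Perm (Fin G)) : Φ (f ∘ π) (g ∘ ρ) = Φ f g := by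
      simpa using hsym f g π ρ 1
    convert expect_mem_Icc_and_abs_sub_le univ_nonempty fun π _ =>
      expect_mem_Icc_and_abs_sub_le univ_nonempty fun ρ _ => hinv π ρ ▸ hP (f ∘ π) (g ∘ ρ)
      using 4 <;> exact eval_symmetrized f g P
  · rintro ⟨Q, hQd, hQ⟩
    refine ⟨bind₁ (columnSums (Fin F) (Fin G)) Q,
      (totalDegree_bind₁_le isHomogeneous_columnSums Q).trans hQd, fun f g => ?_⟩
    convert hQ f g using 4 <;> exact eval_bind₁_columnSums f g Q
end
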